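/- There exists a family {g_α : α ∈ A} of measurable functions from [0,1] to ℝ, indexed by a set A of cardinality continuum, such that for every n ≥ 1, every nonzero real polynomial P in n variables with zero constant term, and every choice of distinct indices α₁,…,α_n ∈ A, the function h = P(g_{α₁},…,g_{α_n}) is Lebesgue integrable on [0,1] and for every 0 ≤ a < b ≤ 1 there is no Riemann integrable function g on [a,b] with h = g almost everywhere on [a,b]. Hence the set of Lebesgue integrable functions that are not equivalent to a Riemann integrable function in any subinterval of [0,1] is strongly 𝔠-algebrable. -/

import Mathlib

open MeasureTheory Set Filter
open scoped ENNReal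

noncomputable section

def eps (n : ℕ) : ℝ := Real.exp (-(n:ℝ)^3)

lemma eps_pos (n : ℕ) : 0 < eps n := Real.exp_pos _
lemma eps_le_one (n : ℕ) : eps n ≤ 1 :=
  Real.exp_le_one_iff.2 (neg_nonpos.2 (by positivity))

def Aset (n : ℕ) : Set ℝ := {x | Int.fract (2^n * x) < eps n}

lemma measurable_Aset (n : ℕ) : MeasurableSet (Aset n) := by
  have : Measurable fun x : ℝ => Int.fract (2^n * x) :=
    measurable_fract.comp (measurable_const.mul measurable_id)
  exact measurableSet_lt this measurable_const

def fE (x : ℝ) : ℝ≥0∞ := ∑' n : ℕ, (Aset n).indicator (fun _ => (n:ℝ≥0∞)) x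

def ff (x : ℝ) : ℝ := (fE x).toReal

lemma measurable_fE : Measurable fE :=
  Measurable.ennreal_tsum fun n => (measurable_const.indicator (measurable_Aset n))

lemma measurable_ff : Measurable ff := measurable_fE.ennreal_toReal

lemma ff_nonneg (x : ℝ) : 0 ≤ ff x := ENNReal.toReal_nonneg

lemma mem_Aset {n : ℕ} {x : ℝ} : x ∈ Aset n ↔ Int.fract (2^n * x) < eps n := Iff.rfl

lemma eps_def (n : ℕ) : eps n = Real.exp (-(n:ℝ)^3) := rfl

lemma Aset_subset_union (n : ℕ) :
    Aset n ∩ Icc 0 1 ⊆ ⋃ k ∈ Finset.range (2^n + 1), Ico ((k:ℝ)/2^n) (((k:ℝ) + eps n)/2^n) := by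
  rintro x ⟨hx, hx0, hx1⟩
  have h2 : (0:ℝ) < 2^n := by positivity
  have hy : (0:ℝ) ≤ 2^n * x := by nlinarith
  have hfr : Int.fract (2^n * x) < eps n := mem_Aset.1 hx
  set k : ℤ := ⌊(2:ℝ)^n * x⌋ with hk
  have hk0 : 0 ≤ k := Int.floor_nonneg.2 hy
  have hfl : (k:ℝ) ≤ 2^n * x := Int.floor_le _
  have hkle : (k:ℝ) ≤ 2^n := le_trans hfl (by nlinarith)
  have hkn : k.toNat < 2^n + 1 := by
    have h1 : k ≤ ((2^n : ℕ) : ℤ) := by exact_mod_cast hkle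
    omega
  refine Set.mem_biUnion (Finset.mem_range.2 hkn) ?_
  have hcast : ((k.toNat : ℕ) : ℝ) = (k:ℝ) := by
    exact_mod_cast congrArg (Int.cast : ℤ → ℝ) (Int.toNat_of_nonneg hk0)
  constructor
  · rw [hcast, div_le_iff₀ h2]; linarith
  · rw [hcast, lt_div_iff₀ h2]
    have : Int.fract (2^n * x) = 2^n * x - k := rfl
    nlinarith

lemma volume_Aset_le (n : ℕ) : volume (Aset n ∩ Icc 0 1) ≤ ENNReal.ofReal (2 * eps n) := by
  refine le_trans (measure_mono (Aset_subset_union n)) ?_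
  refine le_trans (measure_biUnion_finset_le _ _) ?_
  have h2 : (0:ℝ) < 2^n := by positivity
  have hIco : ∀ k : ℕ, volume (Ico ((k:ℝ)/2^n) (((k:ℝ) + eps n)/2^n))
      = ENNReal.ofReal (eps n / 2^n) := by
    intro k; rw [Real.volume_Ico]; ring_nf
  calc ∑ k ∈ Finset.range (2^n + 1), volume (Ico ((k:ℝ)/2^n) (((k:ℝ) + eps n)/2^n))
      = ((2^n + 1 : ℕ) : ℝ≥0∞) * ENNReal.ofReal (eps n / 2^n) := by
        simp [hIco, Finset.sum_const, mul_comm]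
    _ = ENNReal.ofReal (((2^n + 1 : ℕ) : ℝ) * (eps n / 2^n)) := by
        rw [← ENNReal.ofReal_natCast, ← ENNReal.ofReal_mul (by positivity)]
    _ ≤ ENNReal.ofReal (2 * eps n) := by
        refine ENNReal.ofReal_le_ofReal ?_
        have h1 : ((2^n+1:ℕ):ℝ) ≤ 2 * 2^n := by
          push_cast
          nlinarith [(one_le_pow₀ (by norm_num) : (1:ℝ) ≤ 2^n)]
        rw [div_eq_mul_inv]
        have hepos := eps_pos n
        rw [show (2:ℝ) * eps n = (2 * 2^n) * (eps n * (2^n)⁻¹) by field_simp]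
        nlinarith [mul_pos hepos (inv_pos.2 h2)]

lemma summable_two_eps : Summable (fun n => 2 * eps n) := by
  refine Summable.mul_left 2 ?_
  have hg : Summable (fun n : ℕ => Real.exp (-1) ^ n) :=
    summable_geometric_of_lt_one (Real.exp_nonneg _) (Real.exp_lt_one_iff.2 (by norm_num))
  refine Summable.of_nonneg_of_le (fun n => (eps_pos n).le) (fun n => ?_) hg
  rw [eps_def, ← Real.exp_nat_mul]
  refine Real.exp_le_exp.2 ?_
  have : (n:ℝ) ≤ (n:ℝ)^3 := by
    rcases Nat.eq_zero_or_pos n with h | h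
    · simp [h]
    · have h1 : (1:ℝ) ≤ (n:ℝ) := by exact_mod_cast h
      have h2 : (1:ℝ) ≤ (n:ℝ)^2 := one_le_pow₀ h1
      nlinarith [mul_le_mul_of_nonneg_left h2 (by linarith : (0:ℝ) ≤ (n:ℝ))]
  linarith

lemma tsum_volume_ne_top : (∑' n, volume (Aset n ∩ Icc 0 1)) ≠ ∞ := by
  refine ne_of_lt (lt_of_le_of_lt (ENNReal.tsum_le_tsum volume_Aset_le) ?_)
  rw [← ENNReal.ofReal_tsum_of_nonneg (fun n => (mul_pos two_pos (eps_pos n)).le) summable_two_eps]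
  exact ENNReal.ofReal_lt_top

def Lbad : Set ℝ := {x | ¬ ({n : ℕ | x ∈ Aset n ∩ Icc 0 1}.Finite)}

lemma volume_Lbad : volume Lbad = 0 := by
  have h := ae_finite_setOf_mem (μ := volume) tsum_volume_ne_top
  rw [ae_iff] at h
  exact h

lemma fE_ne_top {x : ℝ} (hx : x ∈ Icc (0:ℝ) 1) (hb : x ∉ Lbad) : fE x ≠ ∞ := by
  have hfin : ({n : ℕ | x ∈ Aset n ∩ Icc 0 1}).Finite := not_not.1 hb
  have hs : ∀ n ∉ hfin.toFinset, (Aset n).indicator (fun _ => (n:ℝ≥0∞)) x = 0 := by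
    intro n hn
    rw [Set.Finite.mem_toFinset] at hn
    have : x ∉ Aset n := fun h => hn ⟨h, hx⟩
    simp [Set.indicator_of_notMem this]
  rw [fE, tsum_eq_sum hs]
  refine (ENNReal.sum_lt_top.2 (fun n _ => ?_)).ne
  exact lt_of_le_of_lt (Set.indicator_apply_le' (fun _ => le_refl _) (fun _ => zero_le)) (ENNReal.natCast_lt_top n)

lemma ff_ge {x : ℝ} {n : ℕ} (hx : x ∈ Icc (0:ℝ) 1) (hb : x ∉ Lbad) (hA : x ∈ Aset n) :
    (n:ℝ) ≤ ff x := by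
  have h1 : (n:ℝ≥0∞) ≤ fE x := by
    have := ENNReal.le_tsum (f := fun m : ℕ => (Aset m).indicator (fun _ => (m:ℝ≥0∞)) x) n
    rwa [Set.indicator_of_mem hA] at this
  have := ENNReal.toReal_mono (fE_ne_top hx hb) h1
  simpa [ff] using this

lemma ff_le {x : ℝ} {N : ℕ} (h : ∀ m, N < m → x ∉ Aset m) : ff x ≤ ((N:ℝ) + 1)^2 := by
  have hs : ∀ n ∉ Finset.range (N+1), (Aset n).indicator (fun _ => (n:ℝ≥0∞)) x = 0 := by
    intro n hn
    rw [Finset.mem_range, not_lt] at hn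
    exact Set.indicator_of_notMem (h n (by omega)) _
  have h1 : fE x ≤ (((N+1)^2 : ℕ) : ℝ≥0∞) := by
    rw [fE, tsum_eq_sum hs]
    calc ∑ n ∈ Finset.range (N+1), (Aset n).indicator (fun _ => (n:ℝ≥0∞)) x
        ≤ ∑ n ∈ Finset.range (N+1), (N:ℝ≥0∞) := by
          refine Finset.sum_le_sum (fun n hn => ?_)
          refine Set.indicator_apply_le' (fun _ => ?_) (fun _ => zero_le)
          exact_mod_cast Nat.cast_le.2 (Nat.lt_succ_iff.1 (Finset.mem_range.1 hn))
      _ ≤ (((N+1)^2 : ℕ) : ℝ≥0∞) := by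
          rw [Finset.sum_const, Finset.card_range]
          rw [nsmul_eq_mul, ← Nat.cast_mul]
          exact_mod_cast Nat.cast_le.2 (by nlinarith : (N+1) * N ≤ (N+1)^2)
  have := ENNReal.toReal_mono (ENNReal.natCast_ne_top _) h1
  rw [ff]
  refine le_trans this ?_
  push_cast
  ring_nf
  exact le_refl _

lemma notLbad_finite {x : ℝ} (hx : x ∈ Icc (0:ℝ) 1) (hb : x ∉ Lbad) :
    ({n : ℕ | x ∈ Aset n}).Finite := by
  have hfin : ({n : ℕ | x ∈ Aset n ∩ Icc 0 1}).Finite := not_not.1 hb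
  exact Set.Finite.subset hfin (fun n hn => ⟨hn, hx⟩)

lemma summable_u (t : ℝ) :
    Summable (fun N : ℕ => Real.exp (t * ((N:ℝ)+2)^2) * (2 * eps (N+1))) := by
  have hpos : ∀ N : ℕ, 0 < Real.exp (t * ((N:ℝ)+2)^2) * (2 * eps (N+1)) :=
    fun N => mul_pos (Real.exp_pos _) (mul_pos two_pos (eps_pos _))
  refine summable_of_ratio_norm_eventually_le (r := Real.exp (-1))
    (Real.exp_lt_one_iff.2 (by norm_num)) ?_
  filter_upwards [Filter.eventually_atTop.2 ⟨⌈t⌉₊, fun N hN => hN⟩] with N hN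
  have ht : t ≤ (N:ℝ) := le_trans (Nat.le_ceil t) (by exact_mod_cast hN)
  rw [Real.norm_of_nonneg (hpos _).le, Real.norm_of_nonneg (hpos _).le]
  simp only [eps_def]
  push_cast
  set a := t * ((N:ℝ)+1+2)^2 with ha
  set b := -(((N:ℝ)+1+1)^3) with hb
  set c := t * ((N:ℝ)+2)^2 with hc
  set d := -(((N:ℝ)+1)^3) with hd
  calc Real.exp a * (2 * Real.exp b) = 2 * Real.exp (a + b) := by rw [Real.exp_add]; ring
    _ ≤ 2 * Real.exp (-1 + (c + d)) := by
        refine mul_le_mul_of_nonneg_left (Real.exp_le_exp.2 ?_) two_pos.le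
        rw [ha, hb, hc, hd]
        nlinarith [Nat.cast_nonneg (α := ℝ) N]
    _ = Real.exp (-1) * (Real.exp c * (2 * Real.exp d)) := by
        rw [Real.exp_add, Real.exp_add]; ring

def E0 : Set ℝ := {x | ∀ m : ℕ, 0 < m → x ∉ Aset m} ∩ Icc 0 1
def DN (N : ℕ) : Set ℝ := (Aset (N+1) ∩ Icc 0 1) ∩ {x | ∀ m : ℕ, N+1 < m → x ∉ Aset m}

lemma measurable_E0 : MeasurableSet E0 := by
  refine MeasurableSet.inter ?_ measurableSet_Icc
  have : {x : ℝ | ∀ m : ℕ, 0 < m → x ∉ Aset m} = ⋂ m : ℕ, ⋂ _ : 0 < m, (Aset m)ᶜ := by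
    ext x; simp [Set.mem_iInter]
  rw [this]
  exact MeasurableSet.iInter fun m => MeasurableSet.iInter fun _ => (measurable_Aset m).compl

lemma measurable_DN (N : ℕ) : MeasurableSet (DN N) := by
  refine MeasurableSet.inter ((measurable_Aset _).inter measurableSet_Icc) ?_
  have : {x : ℝ | ∀ m : ℕ, N+1 < m → x ∉ Aset m} = ⋂ m : ℕ, ⋂ _ : N+1 < m, (Aset m)ᶜ := by
    ext x; simp [Set.mem_iInter]
  rw [this]
  exact MeasurableSet.iInter fun m => MeasurableSet.iInter fun _ => (measurable_Aset m).compl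

lemma cover : Icc (0:ℝ) 1 ⊆ Lbad ∪ E0 ∪ ⋃ N : ℕ, DN N := by
  intro x hx
  by_cases hb : x ∈ Lbad
  · exact Or.inl (Or.inl hb)
  have hfin := notLbad_finite hx hb
  set s := hfin.toFinset.filter (fun n => 0 < n) with hs
  by_cases hne : s.Nonempty
  · refine Or.inr (Set.mem_iUnion.2 ?_)
    set M := s.max' hne with hM
    have hMs : M ∈ s := s.max'_mem hne
    have hM1 : 0 < M := (Finset.mem_filter.1 hMs).2
    have hMA : x ∈ Aset M := by
      have := (Finset.mem_filter.1 hMs).1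
      rwa [Set.Finite.mem_toFinset] at this
    refine ⟨M - 1, ⟨⟨by simpa [Nat.sub_add_cancel hM1] using hMA, hx⟩, ?_⟩⟩
    intro m hm hAm
    have hms : m ∈ s := Finset.mem_filter.2 ⟨(Set.Finite.mem_toFinset _).2 hAm, by omega⟩
    have := s.le_max' m hms
    omega
  · refine Or.inl (Or.inr ⟨?_, hx⟩)
    intro m hm hAm
    exact hne ⟨m, Finset.mem_filter.2 ⟨(Set.Finite.mem_toFinset _).2 hAm, hm⟩⟩

lemma integrable_exp_ff {t : ℝ} (ht : 0 < t) :
    IntegrableOn (fun x => Real.exp (t * ff x)) (Icc 0 1) volume := by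
  constructor
  · exact (Real.measurable_exp.comp (measurable_const.mul measurable_ff)).aestronglyMeasurable
  rw [HasFiniteIntegral]
  have hnn : ∀ x : ℝ, ‖Real.exp (t * ff x)‖ₑ = ENNReal.ofReal (Real.exp (t * ff x)) :=
    fun x => by rw [← Real.enorm_eq_ofReal (Real.exp_nonneg _)]
  simp only [hnn]
  set g := fun x => ENNReal.ofReal (Real.exp (t * ff x)) with hg
  have hcover := cover
  calc ∫⁻ x in Icc (0:ℝ) 1, g x
      ≤ ∫⁻ x in Lbad ∪ E0 ∪ ⋃ N : ℕ, DN N, g x := lintegral_mono_set hcover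
    _ ≤ (∫⁻ x in Lbad ∪ E0, g x) + ∫⁻ x in ⋃ N : ℕ, DN N, g x := lintegral_union_le _ _ _
    _ ≤ ((∫⁻ x in Lbad, g x) + ∫⁻ x in E0, g x) + ∑' N : ℕ, ∫⁻ x in DN N, g x := by
        exact add_le_add (lintegral_union_le _ _ _) (lintegral_iUnion_le _ _)
    _ < ∞ := by
        have h1 : ∫⁻ x in Lbad, g x = 0 := by
          rw [setLIntegral_measure_zero _ _ volume_Lbad]
        have h2 : ∫⁻ x in E0, g x ≤ ENNReal.ofReal (Real.exp t) := by
          calc ∫⁻ x in E0, g x ≤ ∫⁻ _ in E0, ENNReal.ofReal (Real.exp t) := by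
                refine setLIntegral_mono measurable_const (fun x hx => ?_)
                refine ENNReal.ofReal_le_ofReal (Real.exp_le_exp.2 ?_)
                have h0 := ff_le (N := 0) (fun m hm => hx.1 m hm)
                have h0' : ff x ≤ 1 := by simpa using h0
                nlinarith [mul_le_mul_of_nonneg_left h0' ht.le]
            _ = ENNReal.ofReal (Real.exp t) * volume E0 := setLIntegral_const _ _
            _ ≤ ENNReal.ofReal (Real.exp t) * 1 := by
                refine mul_le_mul_right ?_ _
                have : volume E0 ≤ volume (Icc (0:ℝ) 1) := measure_mono (fun x hx => hx.2)
                simpa [Real.volume_Icc] using this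
            _ = ENNReal.ofReal (Real.exp t) := mul_one _
        have h3 : ∀ N : ℕ, ∫⁻ x in DN N, g x
            ≤ ENNReal.ofReal (Real.exp (t * ((N:ℝ)+2)^2) * (2 * eps (N+1))) := by
          intro N
          calc ∫⁻ x in DN N, g x
              ≤ ∫⁻ _ in DN N, ENNReal.ofReal (Real.exp (t * ((N:ℝ)+2)^2)) := by
                refine setLIntegral_mono measurable_const (fun x hx => ?_)
                refine ENNReal.ofReal_le_ofReal (Real.exp_le_exp.2 ?_)
                have h0 := ff_le (N := N+1) (fun m hm => hx.2 m hm)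
                push_cast at h0
                have h0' : ff x ≤ ((N:ℝ)+2)^2 := by nlinarith
                nlinarith [mul_le_mul_of_nonneg_left h0' ht.le]
            _ = ENNReal.ofReal (Real.exp (t * ((N:ℝ)+2)^2)) * volume (DN N) :=
                setLIntegral_const _ _
            _ ≤ ENNReal.ofReal (Real.exp (t * ((N:ℝ)+2)^2)) * ENNReal.ofReal (2 * eps (N+1)) := by
                refine mul_le_mul_right ?_ _
                exact le_trans (measure_mono (fun x hx => hx.1)) (volume_Aset_le (N+1))
            _ = ENNReal.ofReal (Real.exp (t * ((N:ℝ)+2)^2) * (2 * eps (N+1))) := by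
                rw [← ENNReal.ofReal_mul (Real.exp_nonneg _)]
        have h4 : ∑' N : ℕ, ∫⁻ x in DN N, g x
            ≤ ENNReal.ofReal (∑' N : ℕ, Real.exp (t * ((N:ℝ)+2)^2) * (2 * eps (N+1))) := by
          rw [ENNReal.ofReal_tsum_of_nonneg
            (fun N => mul_nonneg (Real.exp_nonneg _) (mul_pos two_pos (eps_pos _)).le)
            (summable_u t)]
          exact ENNReal.tsum_le_tsum h3
        have := add_le_add (add_le_add h1.le h2) h4
        refine lt_of_le_of_lt this ?_
        rw [zero_add]
        exact ENNReal.add_lt_top.2 ⟨ENNReal.ofReal_lt_top, ENNReal.ofReal_lt_top⟩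

lemma spike_subset {a b : ℝ} (h0 : 0 ≤ a) (hab : a < b) (n : ℕ)
    (hn : 2 * ((2:ℝ)^n)⁻¹ < b - a) :
    ∃ c : ℝ, Ico c (c + eps n / 2^n) ⊆ Ioo a b ∩ Aset n := by
  have h2 : (0:ℝ) < 2^n := by positivity
  set k : ℕ := ⌊a * 2^n⌋₊ + 1 with hk
  refine ⟨(k:ℝ) / 2^n, fun x hx => ?_⟩
  obtain ⟨hx1, hx2⟩ := hx
  have hfl : (⌊a * 2^n⌋₊ : ℝ) ≤ a * 2^n := Nat.floor_le (by positivity)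
  have hlt : a * 2^n < (k:ℝ) := by
    rw [hk]; push_cast; exact Nat.lt_floor_add_one _
  have hca : a < (k:ℝ) / 2^n := by rw [lt_div_iff₀ h2]; linarith
  have hcb : (k:ℝ) / 2^n + eps n / 2^n ≤ b := by
    rw [hk]
    push_cast
    rw [← add_div, div_le_iff₀ h2]
    have he1 := eps_le_one n
    have : 2 * ((2:ℝ)^n)⁻¹ * 2^n = 2 := by field_simp
    nlinarith [mul_lt_mul_of_pos_right hn h2]
  have hxa : a < x := lt_of_lt_of_le hca hx1
  have hxb : x < b := by linarith
  refine ⟨⟨hxa, hxb⟩, ?_⟩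
  rw [mem_Aset]
  have he1 := eps_le_one n
  have hxlt : 2^n * x < (k:ℝ) + eps n := by
    have h := mul_lt_mul_of_pos_right hx2 h2
    have heq : ((k:ℝ)/2^n + eps n/2^n) * 2^n = (k:ℝ) + eps n := by field_simp
    nlinarith
  have hxge : (k:ℝ) ≤ 2^n * x := by
    have h := mul_le_mul_of_nonneg_right hx1 h2.le
    have heq : ((k:ℝ)/2^n) * 2^n = (k:ℝ) := by field_simp
    nlinarith
  have hfloor : ⌊(2:ℝ)^n * x⌋ = (k:ℤ) := by
    rw [Int.floor_eq_iff]
    refine ⟨?_, ?_⟩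
    · rw [Int.cast_natCast]; exact hxge
    · rw [Int.cast_natCast]; linarith
  rw [Int.fract, hfloor, Int.cast_natCast]
  linarith

lemma abs_linearIndependent {n : ℕ} (v : Fin n → ℝ) (hv : LinearIndependent ℚ v) :
    LinearIndependent ℚ (fun i => |v i|) := by
  rw [Fintype.linearIndependent_iff] at hv ⊢
  intro g hg
  set g' : Fin n → ℚ := fun i => if 0 ≤ v i then g i else -g i with hg'
  have hsum : ∑ i, g' i • v i = 0 := by
    rw [← hg]
    refine Finset.sum_congr rfl (fun i _ => ?_)
    by_cases hvi : 0 ≤ v i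
    · rw [hg']; simp only [if_pos hvi]; rw [abs_of_nonneg hvi]
    · rw [hg']; simp only [if_neg hvi]
      push_neg at hvi
      rw [abs_of_neg hvi]
      simp [smul_neg, neg_smul]
  intro i
  have := hv g' hsum i
  rw [hg'] at this
  by_cases hvi : 0 ≤ v i
  · simpa [if_pos hvi] using this
  · simp only [if_neg hvi, neg_eq_zero] at this; exact this

lemma exists_phi : ∃ φ : ℝ → ℝ, (∀ r, 0 < φ r) ∧
    ∀ (n : ℕ) (α : Fin n → ℝ), Function.Injective α →
      LinearIndependent ℚ (fun i => φ (α i)) := by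
  set B := Module.Basis.ofVectorSpace ℚ ℝ with hB
  have hcard : Cardinal.mk ℝ ≤ Cardinal.mk (Module.Basis.ofVectorSpaceIndex ℚ ℝ) := by
    have h1 : Cardinal.mk (Module.Basis.ofVectorSpaceIndex ℚ ℝ) = Module.rank ℚ ℝ := B.mk_eq_rank''
    rw [h1, Real.rank_rat_real, Cardinal.mk_real]
  obtain ⟨e⟩ := Cardinal.le_def _ _ |>.1 hcard
  refine ⟨fun r => |B (e r)|, fun r => abs_pos.2 (B.ne_zero _), ?_⟩
  intro n α hα
  exact abs_linearIndependent _ (B.linearIndependent.comp (e ∘ α) (e.injective.comp hα))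

lemma T_inj {n : ℕ} (v : Fin n → ℝ) (hv : LinearIndependent ℚ v) :
    Function.Injective (fun k : Fin n →₀ ℕ => ∑ i, (k i : ℝ) * v i) := by
  intro k k' hkk
  rw [Fintype.linearIndependent_iff] at hv
  have h0 : ∑ i, ((k i : ℚ) - (k' i : ℚ)) • v i = 0 := by
    have : ∀ i : Fin n, ((k i : ℚ) - (k' i : ℚ)) • v i = (k i : ℝ) * v i - (k' i : ℝ) * v i := by
      intro i
      rw [Rat.smul_def]
      push_cast
      ring
    rw [Finset.sum_congr rfl (fun i _ => this i), Finset.sum_sub_distrib]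
    simpa using sub_eq_zero.2 hkk
  have := hv _ h0
  ext i
  have h := this i
  have : (k i : ℚ) = (k' i : ℚ) := by linarith [sub_eq_zero.1 (by linarith [h] : (k i : ℚ) - (k' i : ℚ) = 0)]
  exact_mod_cast this

lemma T_pos {n : ℕ} (v : Fin n → ℝ) (hpos : ∀ i, 0 < v i) {k : Fin n →₀ ℕ} (hk : k ≠ 0) :
    0 < ∑ i, (k i : ℝ) * v i := by
  obtain ⟨i, hi⟩ := Finsupp.ne_iff.1 hk
  refine Finset.sum_pos' (fun j _ => mul_nonneg (Nat.cast_nonneg _) (hpos j).le) ⟨i, Finset.mem_univ i, ?_⟩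
  have : 0 < k i := Nat.pos_of_ne_zero (by simpa using hi)
  have h1 : (1:ℝ) ≤ (k i : ℝ) := by exact_mod_cast this
  nlinarith [hpos i]

lemma expsum_large {ι : Type*} [DecidableEq ι] {s : Finset ι} (hs : s.Nonempty)
    (c : ι → ℝ) (hc : ∀ k ∈ s, c k ≠ 0) (T : ι → ℝ) (hTpos : ∀ k ∈ s, 0 < T k)
    (hTinj : Set.InjOn T s) (B : ℝ) :
    ∃ M : ℝ, ∀ y : ℝ, M ≤ y → B < |∑ k ∈ s, c k * Real.exp (T k * y)| := by
  obtain ⟨k0, hk0s, hk0max⟩ := s.exists_max_image T hs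
  set G : ℝ → ℝ := fun y => ∑ k ∈ s, c k * Real.exp (T k * y) with hG
  set W : ℝ → ℝ := fun y => ∑ k ∈ s, c k * Real.exp ((T k - T k0) * y) with hW
  have hGW : ∀ y, G y = Real.exp (T k0 * y) * W y := by
    intro y
    rw [hG, hW, Finset.mul_sum]
    refine Finset.sum_congr rfl (fun k _ => ?_)
    have hexp : Real.exp (T k0 * y) * Real.exp ((T k - T k0) * y) = Real.exp (T k * y) := by
      rw [← Real.exp_add]; ring_nf
    rw [← hexp]; ring
  have hWlim : Tendsto W atTop (nhds (c k0)) := by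
    have : ∀ k ∈ s, Tendsto (fun y => c k * Real.exp ((T k - T k0) * y)) atTop
        (nhds (if k = k0 then c k0 else 0)) := by
      intro k hk
      by_cases hkk : k = k0
      · subst hkk
        simp only [if_pos rfl, sub_self, zero_mul, Real.exp_zero, mul_one]
        exact tendsto_const_nhds
      · simp only [if_neg hkk]
        have hneg : T k - T k0 < 0 := by
          rcases lt_or_eq_of_le (hk0max k hk) with h | h
          · linarith
          · exact absurd (hTinj hk hk0s h) hkk
        have h1 : Tendsto (fun y : ℝ => (T k - T k0) * y) atTop atBot := by
          have := tendsto_id.const_mul_atTop_of_neg hneg  -- guess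
          exact this
        have h2 : Tendsto (fun y => Real.exp ((T k - T k0) * y)) atTop (nhds 0) :=
          Real.tendsto_exp_atBot.comp h1
        simpa using h2.const_mul (c k)
    have := tendsto_finset_sum s this
    simp only [Finset.sum_ite_eq' s, if_pos hk0s] at this
    exact this
  have hc0 : 0 < |c k0| / 2 := by
    have := hc k0 hk0s
    positivity
  have hWev : ∀ᶠ y in atTop, |c k0| / 2 ≤ |W y| := by
    have habs : Tendsto (fun y => |W y|) atTop (nhds |c k0|) := hWlim.abs
    exact habs.eventually (eventually_ge_nhds (by linarith : |c k0| / 2 < |c k0|))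
  have hElim : Tendsto (fun y => Real.exp (T k0 * y) * (|c k0| / 2)) atTop atTop := by
    refine Tendsto.atTop_mul_const hc0 ?_
    exact Real.tendsto_exp_atTop.comp (Tendsto.const_mul_atTop (hTpos k0 hk0s) tendsto_id)
  have hBev : ∀ᶠ y in atTop, B < Real.exp (T k0 * y) * (|c k0| / 2) :=
    hElim.eventually_gt_atTop B
  obtain ⟨M, hM⟩ := Filter.eventually_atTop.1 (hWev.and hBev)
  refine ⟨M, fun y hy => ?_⟩
  obtain ⟨h1, h2⟩ := hM y hy
  have : Real.exp (T k0 * y) * (|c k0| / 2) ≤ |G y| := by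
    rw [hGW, abs_mul, abs_of_pos (Real.exp_pos _)]
    exact mul_le_mul_of_nonneg_left h1 (Real.exp_pos _).le
  linarith

/-- Riemann integrability of `g` on `[a,b]`: there is `I ∈ ℝ` such that for every `ε > 0`
there is `δ > 0` such that every tagged partition of `[a,b]` with mesh less than `δ`
has Riemann sum within `ε` of `I`. -/
def RiemannIntegrableOn (g : ℝ → ℝ) (a b : ℝ) : Prop :=
  ∃ I : ℝ, ∀ ε : ℝ, 0 < ε → ∃ δ : ℝ, 0 < δ ∧
    ∀ (n : ℕ) (x tg : ℕ → ℝ), 0 < n →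
      x 0 = a → x n = b →
      (∀ i, i < n → x i < x (i + 1)) →
      (∀ i, i < n → x (i + 1) - x i < δ) →
      (∀ i, i < n → tg i ∈ Set.Icc (x i) (x (i + 1))) →
      |(∑ i ∈ Finset.range n, g (tg i) * (x (i + 1) - x i)) - I| < ε

lemma riemann_bounded {h : ℝ → ℝ} {a b : ℝ} (hab : a < b) (hR : RiemannIntegrableOn h a b) :
    ∃ M : ℝ, ∀ y ∈ Icc a b, |h y| ≤ M := by
  obtain ⟨I, hI⟩ := hR
  obtain ⟨δ, hδ, hP⟩ := hI 1 one_pos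
  set n : ℕ := ⌈(b - a) / δ⌉₊ + 1 with hn
  have hn0 : 0 < n := Nat.succ_pos _
  have hnR : (0:ℝ) < n := by exact_mod_cast hn0
  set Δ : ℝ := (b - a) / n with hΔ
  have hΔ0 : 0 < Δ := div_pos (by linarith) hnR
  have hmesh : Δ < δ := by
    rw [hΔ, div_lt_iff₀ hnR]
    have h1 : (b - a) / δ ≤ (⌈(b - a) / δ⌉₊ : ℝ) := Nat.le_ceil _
    have h2 : ((⌈(b - a) / δ⌉₊ : ℝ)) < n := by rw [hn]; push_cast; linarith
    calc b - a = ((b - a)/δ) * δ := by field_simp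
      _ < (n:ℝ) * δ := by
          refine mul_lt_mul_of_pos_right ?_ hδ
          linarith
      _ = δ * n := by ring
  set X : ℕ → ℝ := fun i => a + i * Δ with hX
  have hX0 : X 0 = a := by simp [hX]
  have hXn : X n = b := by
    rw [hX, hΔ]; field_simp; ring
  have hXd : ∀ i : ℕ, X (i+1) - X i = Δ := by
    intro i; rw [hX]; push_cast; ring
  have hXmono : ∀ i, i < n → X i < X (i+1) := fun i _ => by
    have := hXd i; linarith
  have hXmesh : ∀ i, i < n → X (i+1) - X i < δ := fun i _ => by rw [hXd]; exact hmesh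
  have hXval : ∀ i : ℕ, X i = a + i * Δ := fun _ => rfl
  have hXle : ∀ i j : ℕ, i ≤ j → X i ≤ X j := by
    intro i j hij
    rw [hXval, hXval]
    have : (i:ℝ) ≤ j := by exact_mod_cast hij
    nlinarith
  set tg0 : ℕ → ℝ := fun j => X j with htg0
  have htg0v : ∀ i, i < n → tg0 i ∈ Set.Icc (X i) (X (i+1)) :=
    fun i hi => ⟨le_refl _, (hXmono i hi).le⟩
  have hS0 := hP n X tg0 hn0 hX0 hXn hXmono hXmesh htg0v
  refine ⟨(∑ j ∈ Finset.range n, |h (X j)|) + 2 / Δ, fun y hy => ?_⟩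
  -- find the cell containing y
  obtain ⟨i, hi, hyi⟩ : ∃ i, i < n ∧ y ∈ Set.Icc (X i) (X (i+1)) := by
    set t : ℝ := (y - a) / Δ with ht
    have ht0 : 0 ≤ t := div_nonneg (by linarith [hy.1]) hΔ0.le
    by_cases hc : ⌊t⌋₊ < n
    · refine ⟨⌊t⌋₊, hc, ?_, ?_⟩
      · rw [hXval]
        have h1 : (⌊t⌋₊ : ℝ) ≤ t := Nat.floor_le ht0
        have h3 : (⌊t⌋₊ : ℝ) * Δ ≤ t * Δ := mul_le_mul_of_nonneg_right h1 hΔ0.le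
        have h2 : t * Δ = y - a := by rw [ht]; field_simp
        linarith
      · rw [hXval]
        have h1 : t < (⌊t⌋₊ : ℝ) + 1 := Nat.lt_floor_add_one _
        have h3 : t * Δ < ((⌊t⌋₊ : ℝ) + 1) * Δ := mul_lt_mul_of_pos_right h1 hΔ0
        have h2 : t * Δ = y - a := by rw [ht]; field_simp
        push_cast
        nlinarith
    · push_neg at hc
      refine ⟨n - 1, by omega, ?_, ?_⟩
      · have hyb : y = b := by
          have h1 : (n:ℝ) ≤ (⌊t⌋₊:ℝ) := by exact_mod_cast hc
          have h2 : (⌊t⌋₊:ℝ) ≤ t := Nat.floor_le ht0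
          have h3 : (n:ℝ) * Δ ≤ t * Δ := by nlinarith
          have h4 : t * Δ = y - a := by rw [ht]; field_simp
          have h5 : (n:ℝ) * Δ = b - a := by rw [hΔ]; field_simp
          have : b ≤ y := by nlinarith
          linarith [hy.2]
        rw [hyb, ← hXn]
        exact hXle _ _ (by omega)
      · have : n - 1 + 1 = n := by omega
        rw [this, hXn]
        exact hy.2
  set tg1 : ℕ → ℝ := fun j => if j = i then y else X j with htg1
  have htg1v : ∀ j, j < n → tg1 j ∈ Set.Icc (X j) (X (j+1)) := by
    intro j hj
    rw [htg1]
    by_cases hji : j = i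
    · subst hji; simpa using hyi
    · simp only [if_neg hji]; exact ⟨le_refl _, (hXmono j hj).le⟩
  have hS1 := hP n X tg1 hn0 hX0 hXn hXmono hXmesh htg1v
  have hdiff : (∑ j ∈ Finset.range n, h (tg1 j) * (X (j+1) - X j))
      - (∑ j ∈ Finset.range n, h (tg0 j) * (X (j+1) - X j))
      = (h y - h (X i)) * Δ := by
    rw [← Finset.sum_sub_distrib]
    rw [Finset.sum_eq_single i]
    · have e1 : tg1 i = y := by simp [htg1]
      have e0 : tg0 i = X i := rfl
      rw [e1, e0, hXd]; ring
    · intro j _ hji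
      have e1 : tg1 j = X j := by simp [htg1, hji]
      have e0 : tg0 j = X j := rfl
      rw [e1, e0]; ring
    · intro habs; exact absurd (Finset.mem_range.2 hi) habs
  have hlt : |(h y - h (X i)) * Δ| < 2 := by
    rw [← hdiff]
    have hring : (∑ j ∈ Finset.range n, h (tg1 j) * (X (j+1) - X j))
        - (∑ j ∈ Finset.range n, h (tg0 j) * (X (j+1) - X j))
        = ((∑ j ∈ Finset.range n, h (tg1 j) * (X (j+1) - X j)) - I)
          - ((∑ j ∈ Finset.range n, h (tg0 j) * (X (j+1) - X j)) - I) := by ring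
    rw [hring]
    calc |_| ≤ |(∑ j ∈ Finset.range n, h (tg1 j) * (X (j+1) - X j)) - I|
        + |(∑ j ∈ Finset.range n, h (tg0 j) * (X (j+1) - X j)) - I| := abs_sub _ _
      _ < 2 := by linarith
  have hXiM : |h (X i)| ≤ ∑ j ∈ Finset.range n, |h (X j)| :=
    Finset.single_le_sum (f := fun j => |h (X j)|) (fun j _ => abs_nonneg _) (Finset.mem_range.2 hi)
  have h2 : |h y - h (X i)| < 2 / Δ := by
    rw [abs_mul, abs_of_pos hΔ0] at hlt
    rw [lt_div_iff₀ hΔ0]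
    exact hlt
  calc |h y| ≤ |h y - h (X i)| + |h (X i)| := by
        have := abs_add_le (h y - h (X i)) (h (X i)); simpa using this
    _ ≤ (∑ j ∈ Finset.range n, |h (X j)|) + 2 / Δ := by linarith

/-- The set of Lebesgue integrable functions on `[0,1]` which are not equivalent to a
Riemann integrable function in any subinterval is strongly `𝔠`-algebrable. -/

theorem stmt4 :
    ∃ g : ℝ → ℝ → ℝ,
      (∀ α, Measurable (g α)) ∧
      ∀ (n : ℕ), 0 < n →
        ∀ P : MvPolynomial (Fin n) ℝ, P ≠ 0 → MvPolynomial.coeff 0 P = 0 →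
          ∀ α : Fin n → ℝ, Function.Injective α →
            MeasureTheory.IntegrableOn
              (fun x => MvPolynomial.eval (fun i => g (α i) x) P) (Set.Icc 0 1) ∧
            ∀ a b : ℝ, 0 ≤ a → a < b → b ≤ 1 →
              ¬ ∃ h : ℝ → ℝ, RiemannIntegrableOn h a b ∧
                (∀ᵐ x ∂(MeasureTheory.volume.restrict (Set.Icc a b)),
                  MvPolynomial.eval (fun i => g (α i) x) P = h x) := by
  obtain ⟨φ, hφpos, hφind⟩ := exists_phi
  refine ⟨fun r x => Real.exp (φ r * ff x), ?_, ?_⟩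
  · exact fun r => Real.measurable_exp.comp (measurable_const.mul measurable_ff)
  intro n hn P hP hP0 α hα
  set v : Fin n → ℝ := fun i => φ (α i) with hv
  have hvpos : ∀ i, 0 < v i := fun i => hφpos _
  have hvind : LinearIndependent ℚ v := hφind n α hα
  set T : (Fin n →₀ ℕ) → ℝ := fun k => ∑ i, (k i : ℝ) * v i with hT
  have hTinj : Function.Injective T := T_inj v hvind
  have hsupp0 : (0 : Fin n →₀ ℕ) ∉ P.support := by
    rw [MvPolynomial.mem_support_iff]
    simpa using hP0
  have hTpos : ∀ k ∈ P.support, 0 < T k := by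
    intro k hk
    refine T_pos v hvpos (fun h0 => hsupp0 (h0 ▸ hk))
  -- key identity
  have heval : ∀ x : ℝ, MvPolynomial.eval (fun i => Real.exp (v i * ff x)) P
      = ∑ k ∈ P.support, MvPolynomial.coeff k P * Real.exp (T k * ff x) := by
    intro x
    rw [MvPolynomial.eval_eq']
    refine Finset.sum_congr rfl (fun k _ => ?_)
    congr 1
    rw [hT]
    have : ∀ i : Fin n, Real.exp (v i * ff x) ^ (k i) = Real.exp ((k i : ℝ) * (v i * ff x)) := by
      intro i; rw [Real.exp_nat_mul]
    rw [Finset.prod_congr rfl (fun i _ => this i), ← Real.exp_sum]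
    congr 1
    rw [Finset.sum_mul]
    refine Finset.sum_congr rfl (fun i _ => ?_)
    ring
  have hfeq : (fun x => MvPolynomial.eval (fun i => Real.exp (v i * ff x)) P)
      = fun x => ∑ k ∈ P.support, MvPolynomial.coeff k P * Real.exp (T k * ff x) :=
    funext heval
  constructor
  · rw [hfeq]
    refine MeasureTheory.integrable_finset_sum _ (fun k hk => ?_)
    exact (integrable_exp_ff (hTpos k hk)).const_mul _
  intro a b h0 hab hb1
  rintro ⟨h, hR, hae⟩
  obtain ⟨M, hM⟩ := riemann_bounded hab hR
  have hsupp : P.support.Nonempty := by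
    rw [Finset.nonempty_iff_ne_empty]
    intro hempty
    exact hP (MvPolynomial.support_eq_empty.1 hempty)
  obtain ⟨M', hM'⟩ := expsum_large hsupp (fun k => MvPolynomial.coeff k P)
    (fun k hk => MvPolynomial.mem_support_iff.1 hk) T hTpos (hTinj.injOn) M
  -- choose N
  obtain ⟨N1, hN1⟩ := pow_unbounded_of_one_lt (2 / (b - a)) (by norm_num : (1:ℝ) < 2)
  set N : ℕ := max N1 ⌈M'⌉₊ with hN
  have hNM' : M' ≤ (N:ℝ) := le_trans (Nat.le_ceil M') (by exact_mod_cast le_max_right _ _)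
  have hNmesh : 2 * ((2:ℝ)^N)⁻¹ < b - a := by
    have hpow : (2:ℝ)^N1 ≤ 2^N := pow_le_pow_right₀ (by norm_num) (le_max_left _ _)
    have h2 : (0:ℝ) < 2^N1 := by positivity
    have h3 : (0:ℝ) < 2^N := by positivity
    rw [div_lt_iff₀ (by linarith : (0:ℝ) < b - a)] at hN1
    have : 2 * ((2:ℝ)^N)⁻¹ ≤ 2 * ((2:ℝ)^N1)⁻¹ := by
      gcongr
    have h4 : 2 * ((2:ℝ)^N1)⁻¹ < b - a := by
      rw [mul_inv_lt_iff₀ h2] -- guess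
      linarith [hN1]
    linarith
  obtain ⟨c0, hc0⟩ := spike_subset h0 hab N hNmesh
  -- the positive measure set where |F| > M
  set S : Set ℝ := (Ioo a b ∩ Aset N) \ Lbad with hS
  have hSsub : S ⊆ {x | MvPolynomial.eval (fun i => Real.exp (v i * ff x)) P ≠ h x} ∩ Icc a b := by
    rintro x ⟨⟨hxab, hxA⟩, hxL⟩
    have hx01 : x ∈ Icc (0:ℝ) 1 := ⟨by linarith [hxab.1], by linarith [hxab.2]⟩
    have hffx : M' ≤ ff x := le_trans hNM' (ff_ge hx01 hxL hxA)
    have hFx : M < |MvPolynomial.eval (fun i => Real.exp (v i * ff x)) P| := by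
      rw [heval]
      exact hM' (ff x) hffx
    have hxIcc : x ∈ Icc a b := ⟨hxab.1.le, hxab.2.le⟩
    refine ⟨?_, hxIcc⟩
    intro hFh
    rw [hFh] at hFx
    exact absurd (hM x hxIcc) (not_le.2 hFx)
  have hZ : volume ({x | MvPolynomial.eval (fun i => Real.exp (v i * ff x)) P ≠ h x} ∩ Icc a b) = 0 := by
    have := hae
    rw [ae_iff] at this
    rwa [Measure.restrict_apply' measurableSet_Icc] at this
  have hS0 : volume S = 0 := measure_mono_null hSsub hZ
  have hSpos : 0 < volume S := by
    have hsub2 : Ico c0 (c0 + eps N / 2^N) \ Lbad ⊆ S := by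
      intro x hx
      exact ⟨hc0 hx.1, hx.2⟩
    have : volume (Ico c0 (c0 + eps N / 2^N) \ Lbad) = volume (Ico c0 (c0 + eps N / 2^N)) :=
      measure_diff_null volume_Lbad
    have hpos : 0 < volume (Ico c0 (c0 + eps N / 2^N)) := by
      rw [Real.volume_Ico]
      rw [show c0 + eps N / 2^N - c0 = eps N / 2^N by ring]
      exact ENNReal.ofReal_pos.2 (div_pos (eps_pos N) (by positivity))
    calc 0 < volume (Ico c0 (c0 + eps N / 2^N)) := hpos
      _ = volume (Ico c0 (c0 + eps N / 2^N) \ Lbad) := this.symm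
      _ ≤ volume S := measure_mono hsub2
  exact absurd hS0 (ne_of_gt hSpos)

end
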